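/- arXiv:1111.3407 — 7 statements merged into one kernel-verified Lean document; each statement's English description precedes it below -/
import Mathlib

section
/- Let A and B be elements of SL(2,ℂ) such that t := Tr(A) is real with t > 2. Suppose Tr(AⁿB) ≠ 0 for every integer n ≥ 0, and that Tr(AB)/Tr(B) ≠ (t − √(t² − 4))/2. Then the sequence of ratios Tr(AⁿB)/Tr(Aⁿ⁻¹B) converges, as n → ∞, to Tr(A)·(1 + √(1 − (2/Tr(A))²))/2, i.e. to (t + √(t² − 4))/2, which is the attracting fixed point of the Möbius map z ↦ Tr(A) − 1/z. -/
/-!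
By Cayley–Hamilton, `A² = Tr(A) A - 1`, so `cₙ = Tr(AⁿB)` satisfies `cₙ₊₂ = t cₙ₊₁ - cₙ`.
With `λ, μ = (t ± √(t² - 4))/2` the roots of `x² - t x + 1`, this gives `cₙ = α λⁿ + β μⁿ`,
and `α ≠ 0` is exactly the condition `c₁/c₀ ≠ μ`. Since `|μ| < |λ|`, the ratios `cₙ₊₁/cₙ`
tend to `λ`.
-/

open Filter Topology

namespace Matrix

theorem sq_fin_two_eq_trace_smul_sub_det {R : Type*} [CommRing R]
    (A : Matrix (Fin 2) (Fin 2) R) :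
    A ^ 2 = A.trace • A - A.det • (1 : Matrix (Fin 2) (Fin 2) R) := by
  ext i j
  fin_cases i <;> fin_cases j <;>
    simp [sq, mul_apply, trace_fin_two, det_fin_two] <;> ring

theorem trace_pow_add_two_mul_fin_two {R : Type*} [CommRing R] (A B : Matrix (Fin 2) (Fin 2) R)
    (n : ℕ) :
    (A ^ (n + 2) * B).trace = A.trace * (A ^ (n + 1) * B).trace - A.det * (A ^ n * B).trace := by
  rw [pow_add, sq_fin_two_eq_trace_smul_sub_det, mul_sub, mul_smul_comm, mul_smul_comm, mul_one,
    ← pow_succ, sub_mul, smul_mul_assoc, smul_mul_assoc, trace_sub, trace_smul, trace_smul,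
    smul_eq_mul, smul_eq_mul]

end Matrix

theorem eq_add_pow_of_recurrence {K : Type*} [Field K] {L M : K} {c : ℕ → K} (hLM : L ≠ M)
    (hc : ∀ n, c (n + 2) = (L + M) * c (n + 1) - L * M * c n) (n : ℕ) :
    c n = (c 1 - M * c 0) / (L - M) * L ^ n + (L * c 0 - c 1) / (L - M) * M ^ n := by
  have hLM' : L - M ≠ 0 := sub_ne_zero.mpr hLM
  induction n using Nat.twoStepInduction with
  | zero => field_simp; ring
  | one => field_simp; ring
  | more n ih₀ ih₁ => rw [hc n, ih₀, ih₁]; ring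

theorem tendsto_ratio_add_pow {𝕜 : Type*} [NormedField 𝕜] {L M α β : 𝕜} (hα : α ≠ 0)
    (hML : ‖M‖ < ‖L‖) :
    Tendsto (fun n : ℕ => (α * L ^ (n + 1) + β * M ^ (n + 1)) / (α * L ^ n + β * M ^ n)) atTop
      (𝓝 L) := by
  have hL : L ≠ 0 := norm_pos_iff.mp ((norm_nonneg M).trans_lt hML)
  have hr : Tendsto (fun n : ℕ => (M / L) ^ n) atTop (𝓝 0) :=
    tendsto_pow_atTop_nhds_zero_of_norm_lt_one <| by
      rwa [norm_div, div_lt_one (hML.trans_le' (norm_nonneg M))]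
  have hlim : Tendsto (fun n : ℕ => (α * L + β * M * (M / L) ^ n) / (α + β * (M / L) ^ n))
      atTop (𝓝 ((α * L + β * M * 0) / (α + β * 0))) :=
    ((tendsto_const_nhds.add (tendsto_const_nhds.mul hr)).div
      (tendsto_const_nhds.add (tendsto_const_nhds.mul hr)) (by simpa using hα))
  rw [mul_zero, mul_zero, add_zero, add_zero, mul_div_cancel_left₀ _ hα] at hlim
  refine hlim.congr fun n => ?_
  have hLn : L ^ n ≠ 0 := pow_ne_zero n hL
  have hpow : (M / L) ^ n * L ^ n = M ^ n := by rw [← mul_pow, div_mul_cancel₀ _ hL]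
  rw [← mul_div_mul_right _ _ hLn]
  congr 1
  · rw [add_mul, mul_assoc (β * M), hpow]; ring
  · rw [add_mul, mul_assoc β, hpow]

theorem tendsto_ratio_of_recurrence {𝕜 : Type*} [NormedField 𝕜] {L M : 𝕜} {c : ℕ → 𝕜}
    (hML : ‖M‖ < ‖L‖) (hc : ∀ n, c (n + 2) = (L + M) * c (n + 1) - L * M * c n)
    (h₁ : c 1 ≠ M * c 0) :
    Tendsto (fun n : ℕ => c (n + 1) / c n) atTop (𝓝 L) := by
  have hLM : L ≠ M := fun h => hML.ne (by rw [h])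
  refine (tendsto_ratio_add_pow (β := (L * c 0 - c 1) / (L - M))
    (div_ne_zero (sub_ne_zero.mpr h₁) (sub_ne_zero.mpr hLM)) hML).congr fun n => ?_
  rw [eq_add_pow_of_recurrence hLM hc (n + 1), eq_add_pow_of_recurrence hLM hc n]

theorem Real.half_add_sqrt_mul_half_sub_sqrt {t : ℝ} (ht : 4 ≤ t ^ 2) :
    (t + √(t ^ 2 - 4)) / 2 * ((t - √(t ^ 2 - 4)) / 2) = 1 := by
  linear_combination (-1 / 4 : ℝ) * Real.sq_sqrt (sub_nonneg.mpr ht)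

theorem Real.abs_half_sub_sqrt_lt_abs_half_add_sqrt {t : ℝ} (ht : 2 < t) :
    |(t - √(t ^ 2 - 4)) / 2| < |(t + √(t ^ 2 - 4)) / 2| := by
  have h4 : 0 < t ^ 2 - 4 := by nlinarith
  have hs : √(t ^ 2 - 4) ^ 2 = t ^ 2 - 4 := Real.sq_sqrt h4.le
  have hs₀ : 0 < √(t ^ 2 - 4) := Real.sqrt_pos.mpr h4
  rw [abs_of_pos (by nlinarith), abs_of_pos (by linarith)]
  linarith

/-- For A, B ∈ SL(2,ℂ) with Tr A real and > 2, if Tr(AⁿB) ≠ 0 for all n ≥ 0 and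
    Tr(AB)/Tr(B) ≠ (t − √(t²−4))/2, then Tr(AⁿB)/Tr(Aⁿ⁻¹B) converges to
    (t + √(t²−4))/2, the attracting fixed point of z ↦ Tr(A) − 1/z. -/
theorem tendsto_trace_ratio_hyperbolic
    (A B : Matrix.SpecialLinearGroup (Fin 2) ℂ) (t : ℝ) (ht : 2 < t)
    (htr : ((A : Matrix (Fin 2) (Fin 2) ℂ)).trace = (t : ℂ))
    (hne : ∀ n : ℕ,
      ((A ^ n * B : Matrix.SpecialLinearGroup (Fin 2) ℂ) :
        Matrix (Fin 2) (Fin 2) ℂ).trace ≠ 0)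
    (hstart :
      ((A * B : Matrix.SpecialLinearGroup (Fin 2) ℂ) :
        Matrix (Fin 2) (Fin 2) ℂ).trace /
        ((B : Matrix (Fin 2) (Fin 2) ℂ)).trace ≠
      (((t - Real.sqrt (t ^ 2 - 4)) / 2 : ℝ) : ℂ)) :
    Filter.Tendsto
      (fun n : ℕ =>
        ((A ^ (n + 1) * B : Matrix.SpecialLinearGroup (Fin 2) ℂ) :
          Matrix (Fin 2) (Fin 2) ℂ).trace /
        ((A ^ n * B : Matrix.SpecialLinearGroup (Fin 2) ℂ) :
          Matrix (Fin 2) (Fin 2) ℂ).trace)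
      Filter.atTop
      (nhds (((t + Real.sqrt (t ^ 2 - 4)) / 2 : ℝ) : ℂ)) := by
  set L : ℂ := (((t + Real.sqrt (t ^ 2 - 4)) / 2 : ℝ) : ℂ)
  set M : ℂ := (((t - Real.sqrt (t ^ 2 - 4)) / 2 : ℝ) : ℂ)
  have hsum : (t : ℂ) = L + M := by simp only [L, M]; push_cast; ring
  have hLM : L * M = 1 := by
    simp only [L, M]
    exact_mod_cast Real.half_add_sqrt_mul_half_sub_sqrt (by nlinarith)
  simp only [Matrix.SpecialLinearGroup.coe_mul, Matrix.SpecialLinearGroup.coe_pow] at hne hstart ⊢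
  have hML : ‖M‖ < ‖L‖ := by simpa only [L, M, Complex.norm_real, Real.norm_eq_abs] using
    Real.abs_half_sub_sqrt_lt_abs_half_add_sqrt ht
  refine tendsto_ratio_of_recurrence
    (c := fun n => ((A : Matrix (Fin 2) (Fin 2) ℂ) ^ n * B).trace) hML (fun n => ?_) ?_
  · rw [Matrix.trace_pow_add_two_mul_fin_two, htr, hsum, hLM, A.2, one_mul]
  · simpa [div_eq_iff (by simpa using hne 0)] using hstart
end

section
/- Let A and B be elements of SL(2,ℂ) with Tr(A) = 2 (A parabolic or the identity in trace) and Tr(AB) ≠ Tr(B). Then Tr(AⁿB) ≠ 0 for all sufficiently large n, and the sequence of ratios Tr(AⁿB)/Tr(Aⁿ⁻¹B) converges to 1 as n → ∞. -/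
/-!
Since `det A = 1` and `Tr A = 2`, Cayley–Hamilton gives `(A - 1)² = 0`, so `Aⁿ = 1 + n (A - 1)` and
`Tr (Aⁿ B) = Tr B + n (Tr (A B) - Tr B)` is an affine function of `n` with nonzero slope. Such a
sequence vanishes at most once, and the ratio of consecutive terms tends to `1`.
-/

open Matrix Filter

theorem Matrix.sq_sub_trace_smul_add_det_smul_one_eq_zero {R : Type*} [CommRing R]
    (M : Matrix (Fin 2) (Fin 2) R) : M ^ 2 - M.trace • M + M.det • (1 : Matrix _ _ R) = 0 := by
  ext i j
  fin_cases i <;> fin_cases j <;> simp [sq, mul_apply, det_fin_two, trace_fin_two] <;> ring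

theorem Matrix.sub_one_sq_eq_zero {R : Type*} [CommRing R] {M : Matrix (Fin 2) (Fin 2) R}
    (htr : M.trace = 2) (hdet : M.det = 1) : (M - 1) ^ 2 = 0 := by
  have := M.sq_sub_trace_smul_add_det_smul_one_eq_zero
  rw [htr, hdet, one_smul, two_smul] at this
  rw [← this]; noncomm_ring

theorem pow_eq_one_add_nsmul_of_sub_one_sq_eq_zero {R : Type*} [Ring R] {a : R}
    (h : (a - 1) ^ 2 = 0) (n : ℕ) : a ^ n = 1 + n • (a - 1) := by
  induction n with
  | zero => simp
  | succ n ih =>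
    calc a ^ (n + 1) = (1 + n • (a - 1)) * (1 + (a - 1)) := by rw [pow_succ, ih, add_sub_cancel]
      _ = 1 + (n + 1) • (a - 1) + n • (a - 1) ^ 2 := by
        rw [sq, mul_add, add_mul, add_mul, one_mul, mul_one, one_mul, smul_mul_assoc, succ_nsmul]
        abel
      _ = 1 + (n + 1) • (a - 1) := by rw [h, smul_zero, add_zero]

theorem Matrix.trace_pow_mul_of_sub_one_sq_eq_zero {n R : Type*} [Fintype n] [DecidableEq n]
    [CommRing R] {M : Matrix n n R} (hM : (M - 1) ^ 2 = 0) (N : Matrix n n R) (k : ℕ) :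
    (M ^ k * N).trace = N.trace + ((M * N).trace - N.trace) * k := by
  rw [pow_eq_one_add_nsmul_of_sub_one_sq_eq_zero hM, add_mul, one_mul, smul_mul_assoc, sub_mul,
    one_mul, trace_add, trace_smul, trace_sub, nsmul_eq_mul, mul_comm]

theorem eventually_add_mul_natCast_ne_zero {K : Type*} [Field K] [CharZero K] (a : K) {d : K}
    (hd : d ≠ 0) : ∀ᶠ n : ℕ in atTop, a + d * n ≠ 0 := by
  have hinj : Function.Injective fun n : ℕ => a + d * n := fun m n h => by
    simpa [hd] using h
  exact (Nat.cofinite_eq_atTop ▸ hinj.tendsto_cofinite).eventually (eventually_cofinite_ne 0)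

/-- If Tr(A) = 2 and Tr(AB) ≠ Tr(B), then Tr(AⁿB) ≠ 0 for all large n and
    Tr(AⁿB)/Tr(Aⁿ⁻¹B) → 1. -/
theorem tendsto_trace_ratio_parabolic
    (A B : Matrix.SpecialLinearGroup (Fin 2) ℂ)
    (htr : ((A : Matrix (Fin 2) (Fin 2) ℂ)).trace = 2)
    (hne :
      ((A * B : Matrix.SpecialLinearGroup (Fin 2) ℂ) :
        Matrix (Fin 2) (Fin 2) ℂ).trace ≠
      ((B : Matrix (Fin 2) (Fin 2) ℂ)).trace) :
    (∃ N : ℕ, ∀ n ≥ N,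
      ((A ^ n * B : Matrix.SpecialLinearGroup (Fin 2) ℂ) :
        Matrix (Fin 2) (Fin 2) ℂ).trace ≠ 0) ∧
    Filter.Tendsto
      (fun n : ℕ =>
        ((A ^ (n + 1) * B : Matrix.SpecialLinearGroup (Fin 2) ℂ) :
          Matrix (Fin 2) (Fin 2) ℂ).trace /
        ((A ^ n * B : Matrix.SpecialLinearGroup (Fin 2) ℂ) :
          Matrix (Fin 2) (Fin 2) ℂ).trace)
      Filter.atTop (nhds 1) := by
  set a := (B : Matrix (Fin 2) (Fin 2) ℂ).trace
  set d := ((A : Matrix (Fin 2) (Fin 2) ℂ) * B).trace - a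
  have hd : d ≠ 0 := sub_ne_zero.2 (by simpa using hne)
  have htrace (n : ℕ) :
      ((A ^ n * B : Matrix.SpecialLinearGroup (Fin 2) ℂ) : Matrix (Fin 2) (Fin 2) ℂ).trace =
        a + d * n :=
    trace_pow_mul_of_sub_one_sq_eq_zero (sub_one_sq_eq_zero htr A.det_coe) B n
  refine ⟨eventually_atTop.1 ?_, ?_⟩
  · simpa only [htrace] using eventually_add_mul_natCast_ne_zero a hd
  · convert tendsto_add_mul_div_add_mul_atTop_nhds (a + d) a d hd using 2
    · rw [htrace, htrace]; push_cast; ring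
    · exact (div_self hd).symm
end

section
/- Let t be a complex number not lying in the real segment [−2, 2], and let α and β be the two roots of z² − tz + 1 = 0, labelled so that |α| > 1 > |β|. Let (zₙ)ₙ≥0 be a sequence of complex numbers such that zₙ ≠ 0 for all n, z₀ ≠ β, and zₙ₊₁ = t − 1/zₙ for all n ≥ 0. Then the sequence (zₙ) converges to α. -/
/-!
With `α + β = t` and `α β = 1`, the map `f z = t - 1/z` satisfies
`f z - α = β (z - α) / z` and `f z - β = α (z - β) / z`, so in the coordinate
`w = (z - α) / (z - β)` it becomes multiplication by `β / α`, which has norm `< 1`.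
Hence `w` tends to `0` geometrically, and `z` tends to `α`.
-/

open Filter Topology

theorem add_eq_and_mul_eq_of_quadratic_roots {R : Type*} [CommRing R] [IsDomain R]
    {s p α β : R} (hα : α ^ 2 - s * α + p = 0) (hβ : β ^ 2 - s * β + p = 0) (hne : α ≠ β) :
    α + β = s ∧ α * β = p := by
  have hsum : α + β = s := by
    have h : (α - β) * (α + β - s) = 0 := by linear_combination hα - hβ
    exact sub_eq_zero.mp ((mul_eq_zero.mp h).resolve_left (sub_ne_zero.mpr hne))
  exact ⟨hsum, by linear_combination -hα + α * hsum⟩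

section FixedPoints

variable {K : Type*} [Field K] {α β z : K}

theorem add_sub_one_div_sub_left (h : α * β = 1) (hz : z ≠ 0) :
    α + β - 1 / z - α = β * (z - α) / z := by
  field_simp
  linear_combination h

theorem add_sub_one_div_sub_right (h : α * β = 1) (hz : z ≠ 0) :
    α + β - 1 / z - β = α * (z - β) / z := by
  rw [add_comm α β]
  exact add_sub_one_div_sub_left (by rwa [mul_comm]) hz

theorem div_sub_add_sub_one_div (h : α * β = 1) (hz : z ≠ 0) :
    (α + β - 1 / z - α) / (α + β - 1 / z - β) = β / α * ((z - α) / (z - β)) := by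
  rw [add_sub_one_div_sub_left h hz, add_sub_one_div_sub_right h hz,
    div_div_div_cancel_right₀ hz, mul_div_mul_comm]

variable {x : ℕ → K}

theorem orbit_ne_right_fixedPoint (h : α * β = 1) (hx : ∀ n, x n ≠ 0) (hx0 : x 0 ≠ β)
    (hrec : ∀ n, x (n + 1) = α + β - 1 / x n) (n : ℕ) : x n ≠ β := by
  induction n with
  | zero => exact hx0
  | succ n ih =>
    rw [← sub_ne_zero, hrec, add_sub_one_div_sub_right h (hx n)]
    exact div_ne_zero (mul_ne_zero (left_ne_zero_of_mul_eq_one h) (sub_ne_zero.mpr ih)) (hx n)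

theorem orbit_crossRatio_eq (h : α * β = 1) (hx : ∀ n, x n ≠ 0)
    (hrec : ∀ n, x (n + 1) = α + β - 1 / x n) (n : ℕ) :
    (x n - α) / (x n - β) = (β / α) ^ n * ((x 0 - α) / (x 0 - β)) := by
  induction n with
  | zero => rw [pow_zero, one_mul]
  | succ n ih =>
    rw [hrec, div_sub_add_sub_one_div h (hx n), ih, pow_succ]
    ring

end FixedPoints

theorem tendsto_of_tendsto_div_sub_nhds_zero {𝕜 ι : Type*} [Field 𝕜] [TopologicalSpace 𝕜]
    [IsTopologicalDivisionRing 𝕜] [T1Space 𝕜] {l : Filter ι}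
    {α β : 𝕜} {x : ι → 𝕜} (hx : ∀ i, x i ≠ β)
    (hw : Tendsto (fun i => (x i - α) / (x i - β)) l (𝓝 0)) : Tendsto x l (𝓝 α) := by
  set w := fun i => (x i - α) / (x i - β)
  have hnum : Tendsto (fun i => α - β * w i) l (𝓝 α) := by
    simpa using (hw.const_mul β).const_sub α
  have hden : Tendsto (fun i => 1 - w i) l (𝓝 1) := by simpa using hw.const_sub 1
  have hlim : Tendsto (fun i => (α - β * w i) / (1 - w i)) l (𝓝 α) := by
    have := hnum.div hden one_ne_zero
    rwa [div_one] at this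
  refine hlim.congr' ?_
  filter_upwards [hw.eventually_ne one_ne_zero.symm] with i hwi
  have hxβ : x i - β ≠ 0 := sub_ne_zero.mpr (hx i)
  rw [div_eq_iff (sub_ne_zero.mpr hwi.symm)]
  simp only [w]
  field_simp
  ring

theorem tendsto_orbit_attracting_fixed_point_loxodromic_general
    (t : ℂ)
    (α β : ℂ) (hα : α ^ 2 - t * α + 1 = 0) (hβ : β ^ 2 - t * β + 1 = 0)
    (hαβ : ‖β‖ < 1 ∧ 1 < ‖α‖)
    (z : ℕ → ℂ) (hz : ∀ n, z n ≠ 0) (hz0 : z 0 ≠ β)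
    (hrec : ∀ n, z (n + 1) = t - 1 / z n) :
    Filter.Tendsto z Filter.atTop (nhds α) := by
  obtain ⟨hβ1, hα1⟩ := hαβ
  have hne : α ≠ β := by
    rintro rfl
    exact (hα1.trans hβ1).false
  obtain ⟨rfl, hprod⟩ := add_eq_and_mul_eq_of_quadratic_roots hα hβ hne
  have hratio : ‖β / α‖ < 1 := by
    rw [norm_div, div_lt_one (one_pos.trans hα1)]
    exact hβ1.trans hα1
  refine tendsto_of_tendsto_div_sub_nhds_zero (orbit_ne_right_fixedPoint hprod hz hz0 hrec) ?_
  rw [funext (orbit_crossRatio_eq hprod hz hrec)]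
  simpa using (tendsto_pow_atTop_nhds_zero_of_norm_lt_one hratio).mul_const _

/-- For t ∈ ℂ not a real number in [−2,2], with α, β the roots of z² − tz + 1 = 0
    labelled so that |α| > 1 > |β|, any orbit of z ↦ t − 1/z avoiding 0 and not
    starting at β converges to α. -/
theorem tendsto_orbit_attracting_fixed_point_loxodromic
    (t : ℂ) (ht : ¬ ∃ x : ℝ, -2 ≤ x ∧ x ≤ 2 ∧ t = (x : ℂ))
    (α β : ℂ) (hα : α ^ 2 - t * α + 1 = 0) (hβ : β ^ 2 - t * β + 1 = 0)
    (hαβ : ‖β‖ < 1 ∧ 1 < ‖α‖)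
    (z : ℕ → ℂ) (hz : ∀ n, z n ≠ 0) (hz0 : z 0 ≠ β)
    (hrec : ∀ n, z (n + 1) = t - 1 / z n) :
    Filter.Tendsto z Filter.atTop (nhds α) :=
  tendsto_orbit_attracting_fixed_point_loxodromic_general t α β hα hβ hαβ z hz hz0 hrec
end

section
/- Let A and B be elements of SL(2,ℂ) such that t := Tr(A) is not a real number in the segment [−2, 2] (A is loxodromic). Let α and β be the roots of z² − tz + 1 = 0 with |α| > 1 > |β|. Suppose Tr(AⁿB) ≠ 0 for every integer n ≥ 0 and Tr(AB)/Tr(B) ≠ β. Then Tr(AⁿB)/Tr(Aⁿ⁻¹B) → α as n → ∞. -/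
/-!
By Cayley–Hamilton, `A² = (Tr A) A - 1`, so `uₙ = Tr(AⁿB)` satisfies
`uₙ₊₂ = (α + β) uₙ₊₁ - αβ uₙ` and hence `uₙ = c αⁿ + d βⁿ`. The hypothesis
`Tr(AB)/Tr(B) ≠ β` is exactly `c ≠ 0`, and then `|β/α| < 1` makes the `βⁿ` term negligible,
so `uₙ₊₁ / uₙ → α`.
-/

open Filter Topology

namespace Matrix

variable {R : Type*} [CommRing R]

theorem sq_fin_two (M : Matrix (Fin 2) (Fin 2) R) : M ^ 2 = M.trace • M - M.det • 1 := by
  ext i j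
  fin_cases i <;> fin_cases j <;>
    simp [sq, mul_apply, trace_fin_two, det_fin_two] <;> ring

theorem trace_pow_add_two_mul_of_det_eq_one {M : Matrix (Fin 2) (Fin 2) R} (hM : M.det = 1)
    (N : Matrix (Fin 2) (Fin 2) R) (n : ℕ) :
    (M ^ (n + 2) * N).trace = M.trace * (M ^ (n + 1) * N).trace - (M ^ n * N).trace := by
  have hpow : M ^ (n + 2) * N = M.trace • (M ^ (n + 1) * N) - M ^ n * N := by
    rw [pow_add, sq_fin_two, hM, one_smul, mul_sub, pow_succ, mul_smul_comm, mul_one, sub_mul,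
      smul_mul_assoc]
  rw [hpow, trace_sub, trace_smul, smul_eq_mul]

end Matrix

theorem add_eq_and_mul_eq_one_of_roots {K : Type*} [Field K] {t α β : K} (hαβ : α ≠ β)
    (hα : α ^ 2 - t * α + 1 = 0) (hβ : β ^ 2 - t * β + 1 = 0) : α + β = t ∧ α * β = 1 := by
  have hsum : α + β = t := by
    have h : (α - β) * (α + β - t) = 0 := by linear_combination hα - hβ
    exact sub_eq_zero.mp ((mul_eq_zero.mp h).resolve_left (sub_ne_zero.mpr hαβ))
  exact ⟨hsum, by linear_combination α * hsum - hα⟩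

theorem eq_mul_pow_add_mul_pow_of_recurrence {K : Type*} [Field K] {α β : K} (hαβ : α ≠ β)
    {u : ℕ → K} (hu : ∀ n, u (n + 2) = (α + β) * u (n + 1) - α * β * u n) (n : ℕ) :
    u n = (u 1 - β * u 0) / (α - β) * α ^ n + (α * u 0 - u 1) / (α - β) * β ^ n := by
  have hne : α - β ≠ 0 := sub_ne_zero.mpr hαβ
  induction n using Nat.twoStepInduction with
  | zero => field_simp; ring
  | one => field_simp; ring
  | more n ih₀ ih₁ => rw [hu, ih₀, ih₁]; ring

theorem tendsto_mul_pow_add_mul_pow_div {𝕜 : Type*} [NormedField 𝕜] {α β c : 𝕜} (d : 𝕜)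
    (hc : c ≠ 0) (hβα : ‖β‖ < ‖α‖) :
    Tendsto (fun n : ℕ => (c * α ^ (n + 1) + d * β ^ (n + 1)) / (c * α ^ n + d * β ^ n))
      atTop (𝓝 α) := by
  have hα : α ≠ 0 := norm_pos_iff.mp ((norm_nonneg β).trans_lt hβα)
  have hr : Tendsto (fun n : ℕ => (β / α) ^ n) atTop (𝓝 0) := by
    refine tendsto_pow_atTop_nhds_zero_of_norm_lt_one ?_
    rwa [norm_div, div_lt_one (norm_pos_iff.mpr hα)]
  have hlim : Tendsto (fun n : ℕ => (c * α + d * β * (β / α) ^ n) / (c + d * (β / α) ^ n))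
      atTop (𝓝 (c * α / c)) := by
    refine Tendsto.div ?_ ?_ hc
    · simpa using tendsto_const_nhds.add (hr.const_mul (d * β))
    · simpa using tendsto_const_nhds.add (hr.const_mul d)
  rw [mul_div_cancel_left₀ α hc] at hlim
  refine hlim.congr fun n => ?_
  have hαn : α ^ n ≠ 0 := pow_ne_zero n hα
  rw [div_pow, ← mul_div_mul_left _ _ hαn]
  congr 1
  · field_simp; ring
  · field_simp

theorem tendsto_trace_ratio_loxodromic_general
    (A B : Matrix.SpecialLinearGroup (Fin 2) ℂ) (t : ℂ)
    (htr : ((A : Matrix (Fin 2) (Fin 2) ℂ)).trace = t)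
    (α β : ℂ) (hα : α ^ 2 - t * α + 1 = 0) (hβ : β ^ 2 - t * β + 1 = 0)
    (hαβ : ‖β‖ < 1 ∧ 1 < ‖α‖)
    (hne : ∀ n : ℕ,
      ((A ^ n * B : Matrix.SpecialLinearGroup (Fin 2) ℂ) :
        Matrix (Fin 2) (Fin 2) ℂ).trace ≠ 0)
    (hstart :
      ((A * B : Matrix.SpecialLinearGroup (Fin 2) ℂ) :
        Matrix (Fin 2) (Fin 2) ℂ).trace /
        ((B : Matrix (Fin 2) (Fin 2) ℂ)).trace ≠ β) :
    Filter.Tendsto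
      (fun n : ℕ =>
        ((A ^ (n + 1) * B : Matrix.SpecialLinearGroup (Fin 2) ℂ) :
          Matrix (Fin 2) (Fin 2) ℂ).trace /
        ((A ^ n * B : Matrix.SpecialLinearGroup (Fin 2) ℂ) :
          Matrix (Fin 2) (Fin 2) ℂ).trace)
      Filter.atTop (nhds α) := by
  set u : ℕ → ℂ := fun n => ((A ^ n * B : Matrix.SpecialLinearGroup (Fin 2) ℂ) :
    Matrix (Fin 2) (Fin 2) ℂ).trace with hu_def
  have hβα : ‖β‖ < ‖α‖ := hαβ.1.trans hαβ.2
  have hαβ_ne : α ≠ β := fun h => hβα.ne (by rw [h])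
  obtain ⟨hsum, hprod⟩ := add_eq_and_mul_eq_one_of_roots hαβ_ne hα hβ
  have hrec : ∀ n, u (n + 2) = (α + β) * u (n + 1) - α * β * u n := fun n => by
    simpa [hu_def, hsum, hprod, htr] using
      Matrix.trace_pow_add_two_mul_of_det_eq_one A.2 (B : Matrix (Fin 2) (Fin 2) ℂ) n
  have hc : (u 1 - β * u 0) / (α - β) ≠ 0 := by
    refine div_ne_zero (sub_ne_zero.mpr fun h => hstart ?_) (sub_ne_zero.mpr hαβ_ne)
    have hu0 : u 0 ≠ 0 := hne 0
    simp only [hu_def, pow_zero, one_mul, pow_one] at h hu0 ⊢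
    rw [h, mul_div_cancel_right₀ β hu0]
  simpa only [← eq_mul_pow_add_mul_pow_of_recurrence hαβ_ne hrec] using
    tendsto_mul_pow_add_mul_pow_div ((α * u 0 - u 1) / (α - β)) hc hβα

/-- For A, B ∈ SL(2,ℂ) with A loxodromic (Tr A not a real number in [−2,2]),
    with α, β the roots of z² − (Tr A)z + 1 = 0 labelled so that |α| > 1 > |β|,
    if Tr(AⁿB) ≠ 0 for all n ≥ 0 and Tr(AB)/Tr(B) ≠ β, then
    Tr(AⁿB)/Tr(Aⁿ⁻¹B) → α. -/
theorem tendsto_trace_ratio_loxodromic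
    (A B : Matrix.SpecialLinearGroup (Fin 2) ℂ) (t : ℂ)
    (htr : ((A : Matrix (Fin 2) (Fin 2) ℂ)).trace = t)
    (ht : ¬ ∃ x : ℝ, -2 ≤ x ∧ x ≤ 2 ∧ t = (x : ℂ))
    (α β : ℂ) (hα : α ^ 2 - t * α + 1 = 0) (hβ : β ^ 2 - t * β + 1 = 0)
    (hαβ : ‖β‖ < 1 ∧ 1 < ‖α‖)
    (hne : ∀ n : ℕ,
      ((A ^ n * B : Matrix.SpecialLinearGroup (Fin 2) ℂ) :
        Matrix (Fin 2) (Fin 2) ℂ).trace ≠ 0)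
    (hstart :
      ((A * B : Matrix.SpecialLinearGroup (Fin 2) ℂ) :
        Matrix (Fin 2) (Fin 2) ℂ).trace /
        ((B : Matrix (Fin 2) (Fin 2) ℂ)).trace ≠ β) :
    Filter.Tendsto
      (fun n : ℕ =>
        ((A ^ (n + 1) * B : Matrix.SpecialLinearGroup (Fin 2) ℂ) :
          Matrix (Fin 2) (Fin 2) ℂ).trace /
        ((A ^ n * B : Matrix.SpecialLinearGroup (Fin 2) ℂ) :
          Matrix (Fin 2) (Fin 2) ℂ).trace)
      Filter.atTop (nhds α) :=
  tendsto_trace_ratio_loxodromic_general A B t htr α β hα hβ hαβ hne hstart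
end

section
/- Let λ, τ be complex numbers with sinh(λ/4) ≠ 0 and cosh(λ/4) ≠ 0. Define the 2×2 complex matrices A = [[cosh(λ/2), cosh(λ/2)+1], [cosh(λ/2)−1, cosh(λ/2)]] and B = [[cosh(τ/2)·cosh(λ/4)/sinh(λ/4), −sinh(τ/2)], [−sinh(τ/2), cosh(τ/2)·sinh(λ/4)/cosh(λ/4)]]. Then det(A) = 1, det(B) = 1, and the trace of the commutator A·B·A⁻¹·B⁻¹ equals −2, i.e. the commutator is parabolic. -/
/-!
For `A, B ∈ SL(2)` the trace of the commutator is given by Fricke's identity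
`tr [A, B] = x² + y² + z² - x y z - 2` with `x = tr A`, `y = tr B`, `z = tr AB`, which follows
from Cayley–Hamilton (`A⁻¹ = adj A = x - A`). Writing `c = cosh (λ/4)`, `s = sinh (λ/4)` and
`a = c² + s² = cosh (λ/2)`, one has `x = 2a`, `y = a cosh (τ/2) / (c s)` and
`z = a y - 2a sinh (τ/2)`, so `x² + y² + z² - x y z = 4a² cosh² (τ/2) + y² (1 - a²)`, which
vanishes because `1 - a² = -4c²s²`.
-/

open Complex

namespace Matrix

variable {R : Type*} [CommRing R]

theorem inv_eq_adjugate_of_det_eq_one {n : Type*} [Fintype n] [DecidableEq n]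
    {M : Matrix n n R} (hM : M.det = 1) : M⁻¹ = M.adjugate := by
  rw [inv_def, hM, Ring.inverse_one, one_smul]

theorem trace_commutator_fin_two_of_det_eq_one {A B : Matrix (Fin 2) (Fin 2) R}
    (hA : A.det = 1) (hB : B.det = 1) :
    (A * B * A⁻¹ * B⁻¹).trace =
      A.trace ^ 2 + B.trace ^ 2 + (A * B).trace ^ 2 - A.trace * B.trace * (A * B).trace - 2 := by
  rw [inv_eq_adjugate_of_det_eq_one hA, inv_eq_adjugate_of_det_eq_one hB]
  rw [det_fin_two] at hA hB
  simp only [trace_fin_two, adjugate_fin_two, mul_apply, Fin.sum_univ_two, of_apply, cons_val',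
    cons_val_zero, cons_val_one, empty_val', cons_val_fin_one]
  linear_combination (A 0 0 + A 1 1) ^ 2 * hB + (B 0 0 + B 1 1) ^ 2 * hA -
    2 * ((B 0 0 * B 1 1 - B 0 1 * B 1 0) * hA + hB)

end Matrix

namespace FenchelNielsen

open Matrix

def genA {R : Type*} [CommRing R] (a : R) : Matrix (Fin 2) (Fin 2) R :=
  !![a, a + 1; a - 1, a]

def genB {K : Type*} [Field K] (c s t u : K) : Matrix (Fin 2) (Fin 2) K :=
  !![t * c / s, -u; -u, t * s / c]

theorem det_genA {R : Type*} [CommRing R] (a : R) : (genA a).det = 1 := by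
  rw [genA, det_fin_two_of]
  ring

variable {K : Type*} [Field K] {c s t u : K}

theorem det_genB (hc : c ≠ 0) (hs : s ≠ 0) (htu : t ^ 2 - u ^ 2 = 1) :
    (genB c s t u).det = 1 := by
  rw [genB, det_fin_two_of]
  field_simp
  linear_combination htu

theorem trace_commutator_genA_genB (hc : c ≠ 0) (hs : s ≠ 0) (hcs : c ^ 2 - s ^ 2 = 1)
    (htu : t ^ 2 - u ^ 2 = 1) :
    (genA (c ^ 2 + s ^ 2) * genB c s t u * (genA (c ^ 2 + s ^ 2))⁻¹ * (genB c s t u)⁻¹).trace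
      = -2 := by
  rw [trace_commutator_fin_two_of_det_eq_one (det_genA _) (det_genB hc hs htu)]
  simp only [genA, genB, trace_fin_two, mul_apply, Fin.sum_univ_two, of_apply, cons_val',
    cons_val_zero, cons_val_one, empty_val', cons_val_fin_one]
  field_simp
  linear_combination (-4 * (c ^ 2 + s ^ 2) ^ 2 * c ^ 2 * s ^ 2) * htu -
    (t * (c ^ 2 + s ^ 2)) ^ 2 * (c ^ 2 - s ^ 2 + 1) * hcs

end FenchelNielsen

open FenchelNielsen

/-- The explicit Fenchel–Nielsen matrix generators A, B have determinant 1 and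
    parabolic commutator: Tr(ABA⁻¹B⁻¹) = −2. -/
theorem fenchel_nielsen_generators_det_and_parabolic_commutator
    (l τ : ℂ) (hs : Complex.sinh (l / 4) ≠ 0) (hc : Complex.cosh (l / 4) ≠ 0)
    (A B : Matrix (Fin 2) (Fin 2) ℂ)
    (hA : A = !![Complex.cosh (l / 2), Complex.cosh (l / 2) + 1;
                 Complex.cosh (l / 2) - 1, Complex.cosh (l / 2)])
    (hB : B = !![Complex.cosh (τ / 2) * Complex.cosh (l / 4) / Complex.sinh (l / 4),
                 -Complex.sinh (τ / 2);
                 -Complex.sinh (τ / 2),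
                 Complex.cosh (τ / 2) * Complex.sinh (l / 4) / Complex.cosh (l / 4)]) :
    A.det = 1 ∧ B.det = 1 ∧ (A * B * A⁻¹ * B⁻¹).trace = -2 := by
  have cosh_half : cosh (l / 2) = cosh (l / 4) ^ 2 + sinh (l / 4) ^ 2 := by
    rw [show l / 2 = 2 * (l / 4) by ring, cosh_two_mul]
  have hA' : A = genA (cosh (l / 4) ^ 2 + sinh (l / 4) ^ 2) := by rw [hA, cosh_half, genA]
  have hB' : B = genB (cosh (l / 4)) (sinh (l / 4)) (cosh (τ / 2)) (sinh (τ / 2)) := hB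
  have htu := cosh_sq_sub_sinh_sq (τ / 2)
  subst hA' hB'
  exact ⟨det_genA _, det_genB hc hs htu,
    trace_commutator_genA_genB hc hs (cosh_sq_sub_sinh_sq _) htu⟩
end

section
/- Let c > 0 be a real number and set k = 2·cosh(c/2)/sinh(c/2) (so k > 2). Consider the map f(τ) = k·cosh(τ/2) on the open right half-strip S = {τ ∈ ℂ : Re τ > 0 and −π < Im τ < π}. Then f is injective on S, and its image f(S) equals the right half-plane minus a slit: f(S) = {w ∈ ℂ : Re w > 0} \ {w ∈ ℝ : 0 < w ≤ k}. -/
/-!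
Halving maps the strip onto the half-strip `Re z > 0, |Im z| < π/2`, and `cosh` maps that
half-strip bijectively onto the right half-plane slit along `(0, 1]`; scaling by `k` does the rest.
Since `cosh z = cos (z * I)`, two solutions of `cosh z = w` differ by a sign and a multiple of
`2πi`, which forces injectivity on the strip. For surjectivity, any solution can be normalised by
`z ↦ -z` and `z ↦ log (exp z)` to `Re z ≥ 0, Im z ∈ (-π, π]`; then
`Re (cosh z) = cosh x cos y > 0` forces `|y| < π/2`, and `x = 0` would put `w = cos y` on the slit.
-/

open Complex Set
open scoped Real

def halfStrip (a : ℝ) : Set ℂ := {z : ℂ | 0 < z.re ∧ -a < z.im ∧ z.im < a}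

def slitHalfPlane (a : ℝ) : Set ℂ :=
  {w : ℂ | 0 < w.re} \ {w : ℂ | ∃ x : ℝ, 0 < x ∧ x ≤ a ∧ w = (x : ℂ)}

lemma halfStrip_mono {a b : ℝ} (h : a ≤ b) : halfStrip a ⊆ halfStrip b :=
  fun _ ⟨hre, hlo, hhi⟩ => ⟨hre, by linarith, by linarith⟩

lemma image_div_halfStrip {r : ℝ} (hr : 0 < r) (a : ℝ) :
    (· / (r : ℂ)) '' halfStrip a = halfStrip (a / r) := by
  ext w
  constructor
  · rintro ⟨z, ⟨hre, hlo, hhi⟩, rfl⟩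
    simp only [halfStrip, mem_ofPred_eq, div_ofReal_re, div_ofReal_im, ← neg_div]
    exact ⟨div_pos hre hr, div_lt_div_of_pos_right hlo hr, div_lt_div_of_pos_right hhi hr⟩
  · rintro ⟨hre, hlo, hhi⟩
    refine ⟨w * r, ⟨?_, ?_, ?_⟩, mul_div_cancel_right₀ w (ofReal_ne_zero.2 hr.ne')⟩ <;>
      simp only [mul_re, mul_im, ofReal_re, ofReal_im, mul_zero, sub_zero, zero_add]
    · positivity
    · rwa [← neg_div, div_lt_iff₀ hr] at hlo
    · rwa [lt_div_iff₀ hr] at hhi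

lemma mem_slitHalfPlane {a : ℝ} {w : ℂ} :
    w ∈ slitHalfPlane a ↔ 0 < w.re ∧ (w.im = 0 → a < w.re) := by
  simp only [slitHalfPlane, mem_sdiff, mem_ofPred_eq, not_exists, not_and, and_congr_right_iff]
  intro hre
  constructor
  · intro h him
    by_contra! hle
    exact h w.re hre hle (ext rfl (by simpa using him))
  · rintro h x - hx rfl
    exact absurd (h (ofReal_im x)) (by rwa [ofReal_re, not_lt])

lemma image_const_mul_slitHalfPlane {k : ℝ} (hk : 0 < k) (a : ℝ) :
    (fun w => (k : ℂ) * w) '' slitHalfPlane a = slitHalfPlane (k * a) := by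
  ext w
  simp only [mem_image, mem_slitHalfPlane]
  constructor
  · rintro ⟨v, ⟨hre, hslit⟩, rfl⟩
    simp only [re_ofReal_mul, im_ofReal_mul, mul_eq_zero, hk.ne', false_or]
    exact ⟨mul_pos hk hre, fun him => mul_lt_mul_of_pos_left (hslit him) hk⟩
  · rintro ⟨hre, hslit⟩
    refine ⟨w / k, ⟨?_, fun him => ?_⟩, mul_div_cancel₀ w (ofReal_ne_zero.2 hk.ne')⟩
    · rw [div_ofReal_re]; positivity
    · rw [div_ofReal_im, div_eq_zero_iff, or_iff_left hk.ne'] at him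
      rw [div_ofReal_re, lt_div_iff₀ hk, mul_comm]
      exact hslit him

lemma Real.abs_lt_pi_div_two_of_cos_pos {y : ℝ} (hlo : -π < y) (hhi : y ≤ π)
    (hcos : 0 < Real.cos y) : |y| < π / 2 := by
  by_contra! h
  have := Real.cos_nonpos_of_pi_div_two_le_of_le h (by linarith [abs_le.2 ⟨hlo.le, hhi⟩])
  rw [Real.cos_abs] at this
  linarith

lemma two_lt_two_mul_cosh_div_sinh {x : ℝ} (hx : 0 < x) :
    2 < 2 * Real.cosh x / Real.sinh x := by
  have hsinh : 0 < Real.sinh x := Real.sinh_pos_iff.2 hx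
  rw [lt_div_iff₀ hsinh]
  linarith [Real.sinh_lt_cosh (x := x)]

namespace Complex

lemma cosh_eq_re_add_im (z : ℂ) :
    cosh z = (Real.cosh z.re * Real.cos z.im : ℝ) + (Real.sinh z.re * Real.sin z.im : ℝ) * I := by
  conv_lhs => rw [← re_add_im z]
  rw [cosh_add, cosh_mul_I, sinh_mul_I, ← ofReal_cosh, ← ofReal_sinh, ← ofReal_cos, ← ofReal_sin]
  push_cast
  ring

lemma cosh_re (z : ℂ) : (cosh z).re = Real.cosh z.re * Real.cos z.im := by
  rw [cosh_eq_re_add_im]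
  simp only [add_re, ofReal_re, re_ofReal_mul, I_re, mul_zero, add_zero]

lemma cosh_im (z : ℂ) : (cosh z).im = Real.sinh z.re * Real.sin z.im := by
  rw [cosh_eq_re_add_im]
  simp only [add_im, ofReal_im, im_ofReal_mul, I_im, mul_one, zero_add]

lemma injOn_cosh_halfStrip : InjOn cosh (halfStrip π) := by
  rintro a ⟨ha, ha_lo, ha_hi⟩ b ⟨hb, hb_lo, hb_hi⟩ hab
  rw [← cos_mul_I, ← cos_mul_I, cos_eq_cos_iff] at hab
  obtain ⟨n, hn | hn⟩ := hab
  · have hre := congrArg re hn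
    have him := congrArg im hn
    simp only [mul_re, mul_im, I_re, I_im, add_re, add_im, ofReal_re, ofReal_im, intCast_re,
      intCast_im, re_ofNat, im_ofNat] at hre him
    have hn0 : n = 0 := by
      have hlt : (n : ℝ) * π < 1 * π := by linarith
      have hgt : (-1 : ℝ) * π < n * π := by linarith
      have h1 : n < 1 := by exact_mod_cast lt_of_mul_lt_mul_right hlt Real.pi_pos.le
      have h2 : -1 < n := by exact_mod_cast lt_of_mul_lt_mul_right hgt Real.pi_pos.le
      omega
    subst hn0
    exact ext (by linarith) (by push_cast at hre; linarith)
  · have him := congrArg im hn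
    simp only [mul_im, sub_im, I_re, I_im, ofReal_re, ofReal_im, intCast_re, intCast_im,
      re_ofNat, im_ofNat] at him
    linarith

lemma mapsTo_cosh_halfStrip : MapsTo cosh (halfStrip (π / 2)) (slitHalfPlane 1) := by
  rintro z ⟨hx, hy_lo, hy_hi⟩
  have hcos : 0 < Real.cos z.im := Real.cos_pos_of_mem_Ioo ⟨hy_lo, hy_hi⟩
  refine mem_slitHalfPlane.2 ⟨by rw [cosh_re]; positivity, fun him => ?_⟩
  rw [cosh_im, mul_eq_zero, or_iff_right (Real.sinh_pos_iff.2 hx).ne',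
    Real.sin_eq_zero_iff_of_lt_of_lt (by linarith) (by linarith)] at him
  rw [cosh_re, him, Real.cos_zero, mul_one]
  exact Real.one_lt_cosh.2 hx.ne'

lemma exists_cosh_eq_re_nonneg_im_mem_Ioc (w : ℂ) :
    ∃ z : ℂ, 0 ≤ z.re ∧ -π < z.im ∧ z.im ≤ π ∧ cosh z = w := by
  obtain ⟨u, hu⟩ := cos_surjective w
  obtain ⟨z, hz_re, hz⟩ : ∃ z : ℂ, 0 ≤ z.re ∧ cosh z = w := by
    rcases le_total 0 (u * I).re with h | h
    · exact ⟨u * I, h, by rw [cosh_mul_I, hu]⟩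
    · exact ⟨-(u * I), by rwa [neg_re, neg_nonneg], by rw [cosh_neg, cosh_mul_I, hu]⟩
  obtain ⟨n, hn⟩ := log_exp_exists z
  refine ⟨log (exp z), ?_, neg_pi_lt_log_im _, log_im_le_pi _, ?_⟩
  · rwa [log_re, norm_exp, Real.log_exp]
  · rw [hn, cosh_periodic.int_mul n z, hz]

lemma slitHalfPlane_subset_image_cosh : slitHalfPlane 1 ⊆ cosh '' halfStrip (π / 2) := by
  intro w hw
  obtain ⟨hw_re, hw_slit⟩ := mem_slitHalfPlane.1 hw
  obtain ⟨z, hx, hy_lo, hy_hi, rfl⟩ := exists_cosh_eq_re_nonneg_im_mem_Ioc w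
  rw [cosh_re] at hw_re
  have hy := abs_lt.1 <| Real.abs_lt_pi_div_two_of_cos_pos hy_lo hy_hi <|
    pos_of_mul_pos_right hw_re (Real.cosh_pos _).le
  refine ⟨z, ⟨hx.lt_of_ne fun hx0 => ?_, hy.1, hy.2⟩, rfl⟩
  have hle : (cosh z).re ≤ 1 := by
    rw [cosh_re, ← hx0, Real.cosh_zero, one_mul]
    exact Real.cos_le_one _
  exact hle.not_gt (hw_slit (by rw [cosh_im, ← hx0, Real.sinh_zero, zero_mul]))

lemma image_cosh_halfStrip : cosh '' halfStrip (π / 2) = slitHalfPlane 1 :=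
  (image_subset_iff.2 mapsTo_cosh_halfStrip).antisymm slitHalfPlane_subset_image_cosh

end Complex

/-- For c > 0 and k = 2·coth(c/2) (> 2), the map τ ↦ k·cosh(τ/2) is injective on
    the open right half-strip {Re τ > 0, −π < Im τ < π} and its image is the open
    right half-plane minus the slit (0, k] on the real axis. -/
theorem trace_map_injective_and_image_on_half_strip
    (c : ℝ) (hc : 0 < c) (k : ℝ) (hk : k = 2 * Real.cosh (c / 2) / Real.sinh (c / 2))
    (f : ℂ → ℂ) (hf : f = fun τ : ℂ => (k : ℂ) * Complex.cosh (τ / 2))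
    (S : Set ℂ)
    (hS : S = {τ : ℂ | 0 < τ.re ∧ -Real.pi < τ.im ∧ τ.im < Real.pi}) :
    2 < k ∧ Set.InjOn f S ∧
      f '' S = {w : ℂ | 0 < w.re} \ {w : ℂ | ∃ x : ℝ, 0 < x ∧ x ≤ k ∧ w = (x : ℂ)} := by
  have hk2 : 2 < k := hk ▸ two_lt_two_mul_cosh_div_sinh (half_pos hc)
  have hk0 : (k : ℂ) ≠ 0 := ofReal_ne_zero.2 (by linarith)
  have hf' : f = (fun w => (k : ℂ) * w) ∘ cosh ∘ (· / ((2 : ℝ) : ℂ)) := by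
    rw [hf, ofReal_ofNat]; rfl
  have hS' : S = halfStrip π := hS
  have hhalf : (· / ((2 : ℝ) : ℂ)) '' halfStrip π = halfStrip (π / 2) :=
    image_div_halfStrip two_pos π
  refine ⟨hk2, ?_, ?_⟩
  · rw [hf', hS']
    refine (mul_right_injective₀ hk0).injOn.comp ?_ (mapsTo_univ _ _)
    exact (injOn_cosh_halfStrip.mono (halfStrip_mono (by linarith [Real.pi_pos]))).comp
      (fun _ _ _ _ h => (div_left_inj' two_ne_zero).1 h) (hhalf ▸ mapsTo_image _ _)
  · rw [hf', hS', image_comp, image_comp, hhalf, image_cosh_halfStrip,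
      image_const_mul_slitHalfPlane (by linarith), mul_one]
    rfl
end

section
/- For every real number M > 0 there exists a complex number d with Re d > M and Im d ≠ 0 such that, for the matrices A_d = [[(d²+1)/d, d³/(2d²+1)], [(2d²+1)/d, d]] and B_d = [[(d²+1)/d, −d³/(2d²+1)], [−(2d²+1)/d, d]], the trace T(d) := Tr(A_d⁻²·B_d) is a real number with |T(d)| > 2. -/
/-!
Since `det A_d = 1`, `A_d⁻¹` is the adjugate of `A_d`, and a direct computation gives
`T(d) = (8d⁴ + 6d² + 1)/d`. For `d = a + bi` with `b ≠ 0`, the condition `Im T(d) = 0` reduces to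
`(24a² + 6 - 8b²)(a² + b²) = 1`, a quadratic in `b²` whose larger root is
`b² = (8a² + 3 + s)/8` with `s = √(256a⁴ + 96a² + 1)`. Along this branch `T(d) = -4as`,
and `|T(d)| = 4|a|s ≥ 4|a|` exceeds `2` as soon as `|a| > 1/2`.
-/

open Complex Matrix

noncomputable section

namespace EarleSlice

def genA (d : ℂ) : Matrix (Fin 2) (Fin 2) ℂ :=
  !![(d ^ 2 + 1) / d, d ^ 3 / (2 * d ^ 2 + 1); (2 * d ^ 2 + 1) / d, d]

def genB (d : ℂ) : Matrix (Fin 2) (Fin 2) ℂ :=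
  !![(d ^ 2 + 1) / d, -(d ^ 3 / (2 * d ^ 2 + 1)); -((2 * d ^ 2 + 1) / d), d]

variable {d : ℂ}

lemma two_mul_sq_add_one_ne_zero (hre : d.re ≠ 0) : 2 * d ^ 2 + 1 ≠ 0 := by
  intro h
  have hre' : 2 * (d.re ^ 2 - d.im ^ 2) + 1 = 0 := by
    simpa [sq] using congrArg Complex.re h
  have him : 4 * d.re * d.im = 0 := by
    have := congrArg Complex.im h
    simp only [add_im, mul_im, sq, re_ofNat, im_ofNat, one_im, zero_im] at this
    linarith
  have hzero : d.im = 0 := by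
    rcases mul_eq_zero.1 him with h4 | h4
    · exact absurd ((mul_eq_zero.1 h4).resolve_left four_ne_zero) hre
    · exact h4
  nlinarith [sq_nonneg d.re]

variable (hd : d ≠ 0) (h2d : 2 * d ^ 2 + 1 ≠ 0)
include hd h2d

lemma det_genA : (genA d).det = 1 := by
  have h2d' : d ^ 2 * 2 + 1 ≠ 0 := by rwa [mul_comm] at h2d
  rw [genA, det_fin_two_of]
  field_simp
  ring

lemma inv_genA :
    (genA d)⁻¹ = !![d, -(d ^ 3 / (2 * d ^ 2 + 1)); -((2 * d ^ 2 + 1) / d), (d ^ 2 + 1) / d] := by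
  rw [Matrix.inv_def, det_genA hd h2d, Ring.inverse_one, one_smul, genA, adjugate_fin_two_of]

lemma trace_inv_genA_sq_mul_genB :
    ((genA d)⁻¹ ^ 2 * genB d).trace = (8 * d ^ 4 + 6 * d ^ 2 + 1) / d := by
  have h2d' : d ^ 2 * 2 + 1 ≠ 0 := by rwa [mul_comm] at h2d
  rw [inv_genA hd h2d, genB, sq, mul_fin_two, mul_fin_two, trace_fin_two_of]
  field_simp
  ring

end EarleSlice

lemma quartic_eq_ofReal_mul_of_sq_im {a b s : ℝ} (hs : s ^ 2 = 256 * a ^ 4 + 96 * a ^ 2 + 1)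
    (hb : 8 * b ^ 2 = 8 * a ^ 2 + 3 + s) :
    8 * (⟨a, b⟩ : ℂ) ^ 4 + 6 * (⟨a, b⟩ : ℂ) ^ 2 + 1 = ((-4 * a * s : ℝ) : ℂ) * ⟨a, b⟩ := by
  apply Complex.ext
  · simp only [add_re, mul_re, pow_succ, pow_zero, one_re, one_im, re_ofNat, im_ofNat, mul_im,
      ofReal_re, ofReal_im]
    linear_combination (b ^ 2 + (s - 40 * a ^ 2 - 3) / 8) * hb + (1 / 8) * hs
  · simp only [add_im, mul_re, mul_im, pow_succ, pow_zero, one_re, one_im, re_ofNat, im_ofNat,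
      ofReal_re, ofReal_im]
    linear_combination (-4 * a * b) * hb

open EarleSlice in
theorem hyperbolic_locus_meets_far_right_half_plane_general
    (M : ℝ) :
    ∃ d : ℂ, M < d.re ∧ d.im ≠ 0 ∧
      ∃ x : ℝ,
        (((!![(d ^ 2 + 1) / d, d ^ 3 / (2 * d ^ 2 + 1);
              (2 * d ^ 2 + 1) / d, d] : Matrix (Fin 2) (Fin 2) ℂ)⁻¹ ^ 2 *
          !![(d ^ 2 + 1) / d, -(d ^ 3 / (2 * d ^ 2 + 1));
             -((2 * d ^ 2 + 1) / d), d]).trace = (x : ℂ) ∧ 2 < |x|) := by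
  set a : ℝ := |M| + 1
  set s : ℝ := √(256 * a ^ 4 + 96 * a ^ 2 + 1)
  set b : ℝ := √((8 * a ^ 2 + 3 + s) / 8)
  have ha : 1 ≤ a := by simp [a]
  have hs_sq : s ^ 2 = 256 * a ^ 4 + 96 * a ^ 2 + 1 := Real.sq_sqrt (by positivity)
  have hs : 1 ≤ s := Real.one_le_sqrt.2 (by nlinarith)
  have hb_sq : 8 * b ^ 2 = 8 * a ^ 2 + 3 + s := by
    rw [Real.sq_sqrt (by positivity)]; ring
  have hb : 0 < b := Real.sqrt_pos.2 (by positivity)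
  have hd : (⟨a, b⟩ : ℂ) ≠ 0 := fun h => hb.ne' (congrArg Complex.im h)
  refine ⟨⟨a, b⟩, by simp only [a]; linarith [le_abs_self M], hb.ne', -4 * a * s, ?_, ?_⟩
  · change ((genA _)⁻¹ ^ 2 * genB _).trace = _
    rw [trace_inv_genA_sq_mul_genB hd (two_mul_sq_add_one_ne_zero (by positivity)),
      quartic_eq_ofReal_mul_of_sq_im hs_sq hb_sq, mul_div_cancel_right₀ _ hd]
  · rw [abs_of_neg (by nlinarith)]
    nlinarith

/-- For every M > 0 the hyperbolic locus of T_{2/1} = Tr(A_d⁻² B_d) meets the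
    region {Re d > M} at non-real points: there is d with Re d > M, Im d ≠ 0,
    such that Tr(A_d⁻² B_d) is real with absolute value > 2. -/
theorem hyperbolic_locus_meets_far_right_half_plane
    (M : ℝ) (hM : 0 < M) :
    ∃ d : ℂ, M < d.re ∧ d.im ≠ 0 ∧
      ∃ x : ℝ,
        (((!![(d ^ 2 + 1) / d, d ^ 3 / (2 * d ^ 2 + 1);
              (2 * d ^ 2 + 1) / d, d] : Matrix (Fin 2) (Fin 2) ℂ)⁻¹ ^ 2 *
          !![(d ^ 2 + 1) / d, -(d ^ 3 / (2 * d ^ 2 + 1));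
             -((2 * d ^ 2 + 1) / d), d]).trace = (x : ℂ) ∧ 2 < |x|) :=
  hyperbolic_locus_meets_far_right_half_plane_general M
end
end
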